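/- Let N ≥ 1 be a natural number and define ζ_N(s) := ∑_{n=1}^{N} (1/2)·(n^{−s} + χ(s)·n^{s−1}). If s is a complex number that is not an integer and ζ_N(s) = 0, then ζ_N(1 − conj(s)) = 0. In particular, the zeros of ζ_N in the critical strip are symmetric with respect to the critical line Re(s) = 1/2. -/

import Mathlib

open Real

/-- `χ(s) = 2^s · π^(s-1) · sin(πs/2) · Γ(1-s)`, the factor in the functional
equation `ζ(s) = χ(s)·ζ(1-s)`. -/
noncomputable def chi (s : ℂ) : ℂ :=
  (2 : ℂ) ^ s * (π : ℂ) ^ (s - 1) * Complex.sin (π * s / 2) * Complex.Gamma (1 - s)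

/-- The `N`-th section `ζ_N(s) = ∑_{n=1}^N (1/2)(n^{-s} + χ(s)·n^{s-1})` of the
approximate functional equation. -/
noncomputable def zetaSection (N : ℕ) (s : ℂ) : ℂ :=
  ∑ n ∈ Finset.Icc 1 N, (1 / 2 : ℂ) * ((n : ℂ) ^ (-s) + chi s * (n : ℂ) ^ (s - 1))

/-! `ζ_N` is real on the real axis, so `ζ_N(conj s) = conj ζ_N(s)`; and `χ(s)χ(1-s) = 1` away
from the integers (Euler's reflection formula), which turns the symmetric shape of each term
`n^{-s} + χ(s) n^{s-1}` into `ζ_N(1 - s) = χ(1 - s) ζ_N(s)`. Together, a zero `s` gives the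
zero `1 - conj s`. -/

open ComplexConjugate

lemma ofReal_cpow_conj {x : ℝ} (hx : 0 ≤ x) (w : ℂ) :
    (x : ℂ) ^ conj w = conj ((x : ℂ) ^ w) := by
  rw [Complex.cpow_conj _ _ (by rw [Complex.arg_ofReal_of_nonneg hx]; exact pi_ne_zero.symm),
    Complex.conj_ofReal]

lemma natCast_cpow_conj (n : ℕ) (w : ℂ) : (n : ℂ) ^ conj w = conj ((n : ℂ) ^ w) := by
  exact_mod_cast ofReal_cpow_conj n.cast_nonneg w

lemma chi_conj (s : ℂ) : chi (conj s) = conj (chi s) := by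
  simp only [chi, map_mul, ← Complex.sin_conj, ← Complex.Gamma_conj, map_div₀,
    Complex.conj_ofReal, map_ofNat, map_sub, map_one]
  have two_cpow : conj ((2 : ℂ) ^ s) = 2 ^ conj s := by simpa using (natCast_cpow_conj 2 s).symm
  rw [two_cpow, ← ofReal_cpow_conj pi_pos.le, map_sub, map_one]

lemma zetaSection_conj (N : ℕ) (s : ℂ) : zetaSection N (conj s) = conj (zetaSection N s) := by
  simp only [zetaSection, map_sum, map_mul, map_add, ← natCast_cpow_conj, chi_conj, map_neg,
    map_sub, map_one, map_div₀, map_ofNat]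

lemma sin_pi_mul_half_mul_sin_pi_mul_one_sub_half (s : ℂ) :
    Complex.sin (π * s / 2) * Complex.sin (π * (1 - s) / 2) = Complex.sin (π * s) / 2 := by
  have double := Complex.sin_two_mul (π * s / 2)
  rw [show 2 * (π * s / 2) = π * s by ring] at double
  rw [show (π : ℂ) * (1 - s) / 2 = π / 2 - π * s / 2 by ring, Complex.sin_pi_div_two_sub, double]
  ring

lemma chi_mul_chi_one_sub {s : ℂ} (hs : s ∈ Complex.integerComplement) :
    chi s * chi (1 - s) = 1 := by
  have hπ : (π : ℂ) ≠ 0 := Complex.ofReal_ne_zero.2 pi_ne_zero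
  have two_cpow : (2 : ℂ) ^ s * 2 ^ (1 - s) = 2 := by
    rw [← Complex.cpow_add _ _ two_ne_zero, add_sub_cancel, Complex.cpow_one]
  have pi_cpow : (π : ℂ) ^ (s - 1) * π ^ (1 - s - 1) = (π : ℂ)⁻¹ := by
    rw [← Complex.cpow_add _ _ hπ, show s - 1 + (1 - s - 1) = -1 by ring, Complex.cpow_neg_one]
  have hsin := sin_pi_mul_ne_zero hs
  rw [chi, chi, sub_sub_cancel]
  calc _ = (2 ^ s * 2 ^ (1 - s)) * ((π : ℂ) ^ (s - 1) * π ^ (1 - s - 1)) *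
        (Complex.sin (π * s / 2) * Complex.sin (π * (1 - s) / 2)) *
        (Complex.Gamma s * Complex.Gamma (1 - s)) := by ring
    _ = 2 * (π : ℂ)⁻¹ * (Complex.sin (π * s) / 2) * (π / Complex.sin (π * s)) := by
        rw [two_cpow, pi_cpow, sin_pi_mul_half_mul_sin_pi_mul_one_sub_half,
          Complex.Gamma_mul_Gamma_one_sub]
    _ = 1 := by field_simp

lemma zetaSection_one_sub (N : ℕ) {s : ℂ} (hs : s ∈ Complex.integerComplement) :
    zetaSection N (1 - s) = chi (1 - s) * zetaSection N s := by
  rw [zetaSection, zetaSection, Finset.mul_sum]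
  refine Finset.sum_congr rfl fun n _ => ?_
  rw [show -(1 - s) = s - 1 by ring, show 1 - s - 1 = -s by ring]
  linear_combination -(1 / 2 : ℂ) * (n : ℂ) ^ (s - 1) * chi_mul_chi_one_sub hs

theorem zetaSection_zero_symm (N : ℕ) (s : ℂ)
    (hs : ∀ m : ℤ, s ≠ (m : ℂ)) (hzero : zetaSection N s = 0) :
    zetaSection N (1 - (starRingEnd ℂ) s) = 0 := by
  have hs' : conj s ∈ Complex.integerComplement := fun ⟨m, hm⟩ =>
    hs m (by simpa using congrArg conj hm.symm)
  rw [zetaSection_one_sub N hs', zetaSection_conj, hzero, map_zero, mul_zero]
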